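/- arXiv:1602.03125 — 3 statements merged into one kernel-verified Lean document; each statement's English description precedes it below -/
import Mathlib

section
/- Let Γ be a smooth solution of the Yang–Mills flow on ℝⁿ × [t₁,t₂] and let φ ∈ C¹_c(ℝⁿ, [0,∞)). Then (1/4)∫_{ℝⁿ} (|F_{t₁}(x)|² − |F_{t₂}(x)|²) φ(x)² dx = ∫_{t₁}^{t₂} ∫_{ℝⁿ} ( |∂_tΓ_t(x)|² φ(x)² + 2 φ(x) Σ_{j=1}^n ⟨ Σ_{i=1}^n ∂_iφ(x) (F_t)_{ij}(x), (∂_tΓ_t)_j(x) ⟩ ) dx dt, where |∂_tΓ_t|² = Σ_j |(∂_tΓ_t)_j|² and |F_t|² = Σ_{i,j=1}^n |(F_t)_{ij}|². -/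
/-!
Differentiating the localized energy `¼ ∫ |F_t|² φ²` under the integral sign and using
`∂ₜF_ij = ∇_i ∂ₜΓ_j − ∇_j ∂ₜΓ_i` (second derivatives of `Γ` commute) together with the
antisymmetry of `F`, its time derivative is `∫ Σ_{i,j} ⟨∇_i ∂ₜΓ_j, F_ij⟩ φ²`. As the `Γ_i` are
skew, `∇` is compatible with the pairing `⟨A, B⟩ = tr(A Bᵀ)`, so the integrand equals
`Σ_i ∂_i (Σ_j ⟨∂ₜΓ_j, F_ij⟩ φ²) − Σ_j ⟨∂ₜΓ_j, Σ_i ∇_i F_ij⟩ φ² − 2φ Σ_j ⟨Σ_i ∂_iφ F_ij, ∂ₜΓ_j⟩`.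
The divergence integrates to zero since `φ` has compact support, and the flow equation turns the
middle term into `|∂ₜΓ|² φ²`. Integrating in time from `t₁` to `t₂` gives the identity.
-/

open MeasureTheory Filter Set
open scoped ContDiff ENNReal

noncomputable section

abbrev Mat (k : ℕ) := Fin k → Fin k → ℝ

def mmul {k : ℕ} (A B : Mat k) : Mat k := fun i j => ∑ l, A i l * B l j

def mbra {k : ℕ} (A B : Mat k) : Mat k := mmul A B - mmul B A

def minner {k : ℕ} (A B : Mat k) : ℝ := ∑ i, ∑ j, A i j * B i j

def msq {k : ℕ} (A : Mat k) : ℝ := minner A A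

abbrev Conn (n k : ℕ) := ℝ → (Fin n → ℝ) → Fin n → Mat k

/-- Spatial partial derivative in the `i`-th coordinate direction. -/
def pd {n : ℕ} {E : Type*} [NormedAddCommGroup E] [NormedSpace ℝ E]
    (f : (Fin n → ℝ) → E) (x : Fin n → ℝ) (i : Fin n) : E :=
  fderiv ℝ f x (Pi.single i 1)

/-- Time derivative of a time-dependent connection. -/
def tderiv {n k : ℕ} (Γ : Conn n k) (t : ℝ) (x : Fin n → ℝ) (j : Fin n) : Mat k :=
  deriv (fun s => Γ s x j) t

/-- Curvature `(F_t)_{ij} = ∂_i(Γ_t)_j − ∂_j(Γ_t)_i + [(Γ_t)_i,(Γ_t)_j]`. -/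
def curv {n k : ℕ} (Γ : Conn n k) (t : ℝ) (x : Fin n → ℝ) (i j : Fin n) : Mat k :=
  pd (fun y => Γ t y j) x i - pd (fun y => Γ t y i) x j + mbra (Γ t x i) (Γ t x j)

/-- Covariant derivative `∇_i om = ∂_i om + [(Γ_t)_i, om]`. -/
def covD {n k : ℕ} (Γ : Conn n k) (t : ℝ) (om : (Fin n → ℝ) → Mat k)
    (x : Fin n → ℝ) (i : Fin n) : Mat k :=
  pd om x i + mbra (Γ t x i) (om x)

/-- A smooth time-dependent connection: jointly smooth in `(t,x)`, with values in the
skew-symmetric matrices `𝔤`. -/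
def IsSmoothConn {n k : ℕ} (Γ : Conn n k) : Prop :=
  ContDiff ℝ ∞ (fun p : ℝ × (Fin n → ℝ) => Γ p.1 p.2)
    ∧ ∀ t x i a b, Γ t x i b a = - (Γ t x i a b)

/-- The Yang–Mills flow equation `∂_t(Γ_t)_j = Σᵢ ∇_i(F_t)_{ij}` on a time interval `I`. -/
def IsYMFlowOn {n k : ℕ} (Γ : Conn n k) (I : Set ℝ) : Prop :=
  ∀ t ∈ I, ∀ x j, tderiv Γ t x j = ∑ i, covD Γ t (fun y => curv Γ t y i j) x i

/-- `|F_t|²(x) = Σ_{i,j} |(F_t)_{ij}(x)|²`. -/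
def normF2 {n k : ℕ} (Γ : Conn n k) (t : ℝ) (x : Fin n → ℝ) : ℝ :=
  ∑ i, ∑ j, msq (curv Γ t x i j)

/-- The backwards heat kernel `G_{z₀}(x,t)` based at `z₀ = (x₀,t₀)`. -/
def gauss {n : ℕ} (z0 : (Fin n → ℝ) × ℝ) (x : Fin n → ℝ) (t : ℝ) : ℝ :=
  (4 * Real.pi * (z0.2 - t)) ^ (-(n : ℝ) / 2) *
    Real.exp (-(∑ i, (x i - z0.1 i) ^ 2) / (4 * (z0.2 - t)))

/-- The entropy `Φ_{z₀}(R;Γ)`. -/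
def Phi {n k : ℕ} (Γ : Conn n k) (z0 : (Fin n → ℝ) × ℝ) (R : ℝ) : ℝ :=
  R ^ 4 / 2 * ∫ x : Fin n → ℝ, normF2 Γ (z0.2 - R ^ 2) x * gauss z0 x (z0.2 - R ^ 2)

/-- The entropy `Ψ_{z₀}(R;Γ)`. -/
def Psi {n k : ℕ} (Γ : Conn n k) (z0 : (Fin n → ℝ) × ℝ) (R : ℝ) : ℝ :=
  R ^ 2 / 2 * ∫ t in Icc (z0.2 - 4 * R ^ 2) (z0.2 - R ^ 2),
    ∫ x : Fin n → ℝ, normF2 Γ t x * gauss z0 x t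

/-- The parabolically rescaled connection `Γ^{λ,z₀}`. -/
def rescale {n k : ℕ} (Γ : Conn n k) (z0 : (Fin n → ℝ) × ℝ) (lam : ℝ) : Conn n k :=
  fun t x i => lam • Γ (lam ^ 2 * t + z0.2) (fun m => lam * x m + z0.1 m) i

/-- Spatial support of `Γ_t` contained in `K` for all `t`. -/
def SuppIn {n k : ℕ} (Γ : Conn n k) (K : Set (Fin n → ℝ)) : Prop :=
  ∀ t x, x ∉ K → Γ t x = 0


section Frobenius

variable {k : ℕ}

lemma isBilinearMap_minner : IsBilinearMap ℝ (minner (k := k)) where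
  add_left _ _ _ := by simp [minner, add_mul, Finset.sum_add_distrib]
  smul_left _ _ _ := by simp [minner, Finset.mul_sum, mul_assoc]
  add_right _ _ _ := by simp [minner, mul_add, Finset.sum_add_distrib]
  smul_right _ _ _ := by simp [minner, Finset.mul_sum, mul_left_comm]

lemma isBilinearMap_mbra : IsBilinearMap ℝ (mbra (k := k)) where
  add_left _ _ _ := by ext; simp [mbra, mmul, add_mul, mul_add, Finset.sum_add_distrib]; ring
  smul_left _ _ _ := by ext; simp [mbra, mmul, Finset.mul_sum, mul_assoc, mul_sub, mul_left_comm]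
  add_right _ _ _ := by ext; simp [mbra, mmul, add_mul, mul_add, Finset.sum_add_distrib]; ring
  smul_right _ _ _ := by ext; simp [mbra, mmul, Finset.mul_sum, mul_assoc, mul_sub, mul_left_comm]

def minnerL (k : ℕ) : Mat k →L[ℝ] Mat k →L[ℝ] ℝ := isBilinearMap_minner.toContinuousBilinearMap

def mbraL (k : ℕ) : Mat k →L[ℝ] Mat k →L[ℝ] Mat k := isBilinearMap_mbra.toContinuousBilinearMap

@[simp] lemma minnerL_apply (A B : Mat k) : minnerL k A B = minner A B := rfl

lemma minner_comm (A B : Mat k) : minner A B = minner B A := by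
  simp only [minner, mul_comm]

lemma minner_add_left (A B C : Mat k) : minner (A + B) C = minner A C + minner B C :=
  isBilinearMap_minner.add_left A B C

lemma minner_add_right (A B C : Mat k) : minner A (B + C) = minner A B + minner A C :=
  isBilinearMap_minner.add_right A B C

lemma minner_smul_left (c : ℝ) (A B : Mat k) : minner (c • A) B = c * minner A B :=
  isBilinearMap_minner.smul_left c A B

lemma minner_sub_left (A B C : Mat k) : minner (A - B) C = minner A C - minner B C := by
  simp only [← minnerL_apply, map_sub, sub_apply]

lemma minner_neg_right (A B : Mat k) : minner A (-B) = -minner A B := by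
  simp only [← minnerL_apply, map_neg]

lemma minner_sum_left {ι : Type*} (s : Finset ι) (f : ι → Mat k) (B : Mat k) :
    minner (∑ i ∈ s, f i) B = ∑ i ∈ s, minner (f i) B := by
  simp only [← minnerL_apply, map_sum, FunLike.coe_sum, Finset.sum_apply]

lemma minner_sum_right {ι : Type*} (s : Finset ι) (A : Mat k) (f : ι → Mat k) :
    minner A (∑ i ∈ s, f i) = ∑ i ∈ s, minner A (f i) := by
  simp only [← minnerL_apply, map_sum]

lemma mbra_comm (A B : Mat k) : mbra A B = -mbra B A := by
  simp only [mbra, neg_sub]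

open scoped Matrix in
lemma minner_eq_trace (A B : Mat k) : minner A B = (Matrix.of A * (Matrix.of B)ᵀ).trace := rfl

lemma of_mbra (A B : Mat k) :
    Matrix.of (mbra A B) = Matrix.of A * Matrix.of B - Matrix.of B * Matrix.of A := rfl

open scoped Matrix in
lemma minner_mbra_of_skew {A : Mat k} (hA : ∀ a b, A b a = -A a b) (X Y : Mat k) :
    minner (mbra A X) Y = -minner X (mbra A Y) := by
  have hAT : (Matrix.of A)ᵀ = -Matrix.of A := by ext a b; simp [hA a b]
  rw [minner_eq_trace, minner_eq_trace, of_mbra, of_mbra]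
  simp only [Matrix.transpose_sub, Matrix.transpose_mul, hAT, Matrix.sub_mul, Matrix.mul_sub,
    Matrix.trace_sub, Matrix.mul_neg, Matrix.neg_mul, Matrix.trace_neg, Matrix.mul_assoc]
  rw [Matrix.trace_mul_comm (Matrix.of A)]
  simp only [Matrix.mul_assoc]
  ring

lemma sum_minner_sub_swap {ι : Type*} [Fintype ι] {X Y : ι → ι → Mat k}
    (hY : ∀ i j, Y j i = -Y i j) :
    ∑ i, ∑ j, minner (X i j - X j i) (Y i j) = 2 * ∑ i, ∑ j, minner (X i j) (Y i j) := by
  have hswap : ∑ i, ∑ j, minner (X j i) (Y i j) = -∑ i, ∑ j, minner (X i j) (Y i j) := by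
    rw [Finset.sum_comm, ← Finset.sum_neg_distrib]
    refine Finset.sum_congr rfl fun i _ => ?_
    rw [← Finset.sum_neg_distrib]
    exact Finset.sum_congr rfl fun j _ => by rw [hY, minner_neg_right]
  simp only [minner_sub_left, Finset.sum_sub_distrib, hswap]
  ring

variable {α : Type*}

@[fun_prop]
lemma Continuous.minner [TopologicalSpace α] {f g : α → Mat k} (hf : Continuous f)
    (hg : Continuous g) : Continuous fun p => minner (f p) (g p) :=
  (minnerL k).continuous₂.comp (hf.prodMk hg)

variable [NormedAddCommGroup α] [NormedSpace ℝ α] {f g : α → Mat k}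

lemma Differentiable.minner (hf : Differentiable ℝ f) (hg : Differentiable ℝ g) :
    Differentiable ℝ fun p => minner (f p) (g p) :=
  (minnerL k).isBoundedBilinearMap.differentiable.comp (hf.prodMk hg)

lemma ContDiff.minner {m : ℕ∞ω} (hf : ContDiff ℝ m f) (hg : ContDiff ℝ m g) :
    ContDiff ℝ m fun p => minner (f p) (g p) :=
  (minnerL k).isBoundedBilinearMap.contDiff.comp (hf.prodMk hg)

lemma ContDiff.mbra {m : ℕ∞ω} (hf : ContDiff ℝ m f) (hg : ContDiff ℝ m g) :
    ContDiff ℝ m fun p => mbra (f p) (g p) :=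
  (mbraL k).isBoundedBilinearMap.contDiff.comp (hf.prodMk hg)

end Frobenius

section PartialDerivatives

variable {n : ℕ} {E F G : Type*} [NormedAddCommGroup E] [NormedSpace ℝ E] [NormedAddCommGroup F]
  [NormedSpace ℝ F] [NormedAddCommGroup G] [NormedSpace ℝ G] {x : Fin n → ℝ} {i : Fin n}

lemma pd_finset_sum {ι : Type*} (s : Finset ι) {f : ι → (Fin n → ℝ) → E}
    (hf : ∀ j ∈ s, DifferentiableAt ℝ (f j) x) :
    pd (fun y => ∑ j ∈ s, f j y) x i = ∑ j ∈ s, pd (f j) x i := by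
  simp [pd, fderiv_fun_sum hf]

lemma pd_bilinear (B : E →L[ℝ] F →L[ℝ] G) {f : (Fin n → ℝ) → E} {g : (Fin n → ℝ) → F}
    (hf : DifferentiableAt ℝ f x) (hg : DifferentiableAt ℝ g x) :
    pd (fun y => B (f y) (g y)) x i = B (pd f x i) (g x) + B (f x) (pd g x i) := by
  simp [pd, B.fderiv_of_bilinear hf hg, add_comm]

lemma pd_mul {f g : (Fin n → ℝ) → ℝ} (hf : DifferentiableAt ℝ f x) (hg : DifferentiableAt ℝ g x) :
    pd (fun y => f y * g y) x i = pd f x i * g x + f x * pd g x i :=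
  pd_bilinear (ContinuousLinearMap.mul ℝ ℝ) hf hg

lemma ContDiff.continuous_pd {f : (Fin n → ℝ) → E} (hf : ContDiff ℝ 1 f) (i : Fin n) :
    Continuous fun x => pd f x i :=
  (hf.continuous_fderiv one_ne_zero).clm_apply continuous_const

end PartialDerivatives

section Slices

variable {n : ℕ} {E : Type*} [NormedAddCommGroup E] [NormedSpace ℝ E]
  {G : ℝ × (Fin n → ℝ) → E} {t : ℝ} {x : Fin n → ℝ}

lemma pd_slice_eq (hG : DifferentiableAt ℝ G (t, x)) (i : Fin n) :
    pd (fun y => G (t, y)) x i = fderiv ℝ G (t, x) (0, Pi.single i 1) := by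
  have h : HasFDerivAt (fun y => G (t, y)) _ x :=
    hG.hasFDerivAt.comp x (hasFDerivAt_prodMk_right t x)
  rw [pd, h.fderiv]
  rfl

lemma deriv_slice_eq (hG : DifferentiableAt ℝ G (t, x)) :
    deriv (fun s => G (s, x)) t = fderiv ℝ G (t, x) (1, 0) :=
  (hG.hasFDerivAt.comp_hasDerivAt t ((hasDerivAt_id t).prodMk (hasDerivAt_const t x))).deriv

lemma hasDerivAt_slice (hG : Differentiable ℝ G) :
    HasDerivAt (fun s : ℝ => G (s, x)) (deriv (fun s : ℝ => G (s, x)) t) t :=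
  (hG.comp (differentiable_id.prodMk (differentiable_const x)) t).hasDerivAt

lemma ContDiff.slice {m : ℕ∞ω} (hG : ContDiff ℝ m G) (t : ℝ) : ContDiff ℝ m fun y => G (t, y) :=
  hG.comp (contDiff_const.prodMk contDiff_id)

lemma ContDiff.pd_slice (hG : ContDiff ℝ ∞ G) (i : Fin n) :
    ContDiff ℝ ∞ fun p : ℝ × (Fin n → ℝ) => pd (fun y => G (p.1, y)) p.2 i := by
  simp_rw [pd_slice_eq (hG.differentiable (by simp) _)]
  exact (hG.fderiv_right le_rfl).clm_apply contDiff_const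

lemma ContDiff.deriv_slice (hG : ContDiff ℝ ∞ G) :
    ContDiff ℝ ∞ fun p : ℝ × (Fin n → ℝ) => deriv (fun s => G (s, p.2)) p.1 := by
  simp_rw [deriv_slice_eq (hG.differentiable (by simp) _)]
  exact (hG.fderiv_right le_rfl).clm_apply contDiff_const

lemma hasDerivAt_pd_slice (hG : ContDiff ℝ ∞ G) (i : Fin n) :
    HasDerivAt (fun s => pd (fun y => G (s, y)) x i)
      (pd (fun y => deriv (fun s => G (s, y)) t) x i) t := by
  have hG2 : ContDiff ℝ ∞ (fderiv ℝ G) := hG.fderiv_right le_rfl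
  have hsymm := hG.contDiffAt.isSymmSndFDerivAt (x := (t, x)) (by simp; norm_cast)
  have hpath : HasDerivAt (fun s : ℝ => (s, x)) ((1 : ℝ), (0 : Fin n → ℝ)) t :=
    (hasDerivAt_id t).prodMk (hasDerivAt_const t x)
  have htime : HasDerivAt (fun s => fderiv ℝ G (s, x)) (fderiv ℝ (fderiv ℝ G) (t, x) (1, 0)) t :=
    (hG2.differentiable (by simp) _).hasFDerivAt.comp_hasDerivAt t hpath
  have hspace : HasFDerivAt (fun y => fderiv ℝ G (t, y))
      (fderiv ℝ (fderiv ℝ G) (t, x) ∘L ContinuousLinearMap.inr ℝ ℝ (Fin n → ℝ)) x :=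
    (hG2.differentiable (by simp) _).hasFDerivAt.comp x (hasFDerivAt_prodMk_right t x)
  simp_rw [pd_slice_eq (hG.differentiable (by simp) _),
    deriv_slice_eq (hG.differentiable (by simp) _)]
  rw [pd, (hspace.clm_apply (hasFDerivAt_const ((1 : ℝ), (0 : Fin n → ℝ)) x)).fderiv]
  simpa [hsymm (0, Pi.single i 1)] using htime.clm_apply (hasDerivAt_const t (0, Pi.single i 1))

end Slices

section CompactSupportIntegrals

variable {X E : Type*} [TopologicalSpace X] [MeasurableSpace X] [OpensMeasurableSpace X]
  [NormedAddCommGroup E] [NormedSpace ℝ E] [SecondCountableTopologyEither X E]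
  {μ : Measure X} [IsLocallyFiniteMeasure μ] {F F' : ℝ → X → E} {K : Set X}

lemma continuous_integral_of_forall_notMem_eq_zero (hF : Continuous F.uncurry) (hK : IsCompact K)
    (hFK : ∀ t, ∀ x ∉ K, F t x = 0) : Continuous fun t => ∫ x, F t x ∂μ := by
  simpa only [setIntegral_eq_integral_of_forall_compl_eq_zero (hFK _)] using
    continuous_parametric_integral_of_continuous (μ := μ) hF hK

lemma hasDerivAt_integral_of_forall_notMem_eq_zero [T2Space X] (hF : Continuous F.uncurry)
    (hF' : Continuous F'.uncurry) (hK : IsCompact K) (hFK : ∀ t, ∀ x ∉ K, F t x = 0)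
    (hd : ∀ t x, HasDerivAt (F · x) (F' t x) t) (t₀ : ℝ) :
    HasDerivAt (fun t => ∫ x, F t x ∂μ) (∫ x, F' t₀ x ∂μ) t₀ := by
  have hF'K t x (hx : x ∉ K) : F' t x = 0 :=
    (hd t x).unique (by simpa only [hFK _ x hx] using hasDerivAt_const t (0 : E))
  obtain ⟨C, hC⟩ :=
    ((isCompact_Icc (a := t₀ - 1) (b := t₀ + 1)).prod hK).exists_bound_of_continuousOn
      hF'.continuousOn
  have hbound : ∀ x, ∀ t ∈ Icc (t₀ - 1) (t₀ + 1), ‖F' t x‖ ≤ K.indicator (fun _ => C) x := by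
    intro x t ht
    by_cases hx : x ∈ K
    · simpa [hx] using hC (t, x) ⟨ht, hx⟩
    · simp [hx, hF'K t x hx]
  exact (hasDerivAt_integral_of_dominated_loc_of_deriv_le (Icc_mem_nhds (by linarith) (by linarith))
    (.of_forall fun t => (hF.comp (Continuous.prodMk_right t)).aestronglyMeasurable)
    ((hF.comp (Continuous.prodMk_right t₀)).integrable_of_hasCompactSupport
      (HasCompactSupport.intro hK (hFK t₀)))
    (hF'.comp (Continuous.prodMk_right t₀)).aestronglyMeasurable (.of_forall hbound)
    ((integrableOn_const hK.measure_ne_top).integrable_indicator hK.measurableSet)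
    (.of_forall fun x t _ => hd t x)).2

end CompactSupportIntegrals

section Divergence

variable {V E : Type*} [NormedAddCommGroup V] [NormedSpace ℝ V] [MeasurableSpace V] [BorelSpace V]
  {μ : Measure V} [NormedAddCommGroup E] [NormedSpace ℝ E] {f : V → E}

lemma ContDiff.integrable_fderiv_apply [IsFiniteMeasureOnCompacts μ] (hf : ContDiff ℝ 1 f)
    (hc : HasCompactSupport f) (v : V) : Integrable (fun x => fderiv ℝ f x v) μ :=
  ((hf.continuous_fderiv one_ne_zero).clm_apply continuous_const).integrable_of_hasCompactSupport
    (hc.fderiv_apply (𝕜 := ℝ) v)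

lemma integral_fderiv_apply_eq_zero [FiniteDimensional ℝ V] [μ.IsAddHaarMeasure]
    (hf : ContDiff ℝ 1 f) (hc : HasCompactSupport f) (v : V) : ∫ x, fderiv ℝ f x v ∂μ = 0 := by
  have h := integral_smul_fderiv_eq_neg_fderiv_smul_of_integrable (μ := μ) (f := fun _ => (1 : ℝ))
    (g := f) (v := v) (by simp) (by simpa using hf.integrable_fderiv_apply hc v)
    (by simpa using hf.continuous.integrable_of_hasCompactSupport hc)
    (fun _ _ => differentiableAt_const _) (fun x _ => hf.differentiable one_ne_zero x)
  simpa using h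

end Divergence

section Connection

variable {n k : ℕ} {Γ : Conn n k} {t : ℝ} {x : Fin n → ℝ}

lemma curv_antisymm (i j : Fin n) : curv Γ t x j i = -curv Γ t x i j := by
  simp only [curv, mbra_comm (Γ t x j)]
  abel

lemma pd_minner_eq_covD {i : Fin n} (hskew : ∀ a b, Γ t x i b a = -Γ t x i a b)
    {f g : (Fin n → ℝ) → Mat k} (hf : DifferentiableAt ℝ f x) (hg : DifferentiableAt ℝ g x) :
    pd (fun y => minner (f y) (g y)) x i
      = minner (covD Γ t f x i) (g x) + minner (f x) (covD Γ t g x i) := by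
  have h := pd_bilinear (minnerL k) (i := i) hf hg
  simp only [minnerL_apply] at h
  rw [h, covD, covD, minner_add_left, minner_add_right, minner_mbra_of_skew hskew]
  ring

lemma IsSmoothConn.contDiff_apply (hΓ : IsSmoothConn Γ) (j : Fin n) :
    ContDiff ℝ ∞ fun p : ℝ × (Fin n → ℝ) => Γ p.1 p.2 j :=
  contDiff_pi.mp hΓ.1 j

lemma IsSmoothConn.contDiff_tderiv (hΓ : IsSmoothConn Γ) (j : Fin n) :
    ContDiff ℝ ∞ fun p : ℝ × (Fin n → ℝ) => tderiv Γ p.1 p.2 j :=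
  (hΓ.contDiff_apply j).deriv_slice

lemma IsSmoothConn.contDiff_covD (hΓ : IsSmoothConn Γ) {f : ℝ × (Fin n → ℝ) → Mat k}
    (hf : ContDiff ℝ ∞ f) (i : Fin n) :
    ContDiff ℝ ∞ fun p : ℝ × (Fin n → ℝ) => covD Γ p.1 (fun y => f (p.1, y)) p.2 i :=
  (hf.pd_slice i).add ((hΓ.contDiff_apply i).mbra hf)

lemma IsSmoothConn.contDiff_curv (hΓ : IsSmoothConn Γ) (i j : Fin n) :
    ContDiff ℝ ∞ fun p : ℝ × (Fin n → ℝ) => curv Γ p.1 p.2 i j :=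
  (((hΓ.contDiff_apply j).pd_slice i).sub ((hΓ.contDiff_apply i).pd_slice j)).add
    ((hΓ.contDiff_apply i).mbra (hΓ.contDiff_apply j))

lemma IsSmoothConn.hasDerivAt_curv (hΓ : IsSmoothConn Γ) (i j : Fin n) :
    HasDerivAt (fun s => curv Γ s x i j)
      (covD Γ t (fun y => tderiv Γ t y j) x i - covD Γ t (fun y => tderiv Γ t y i) x j) t := by
  have hΓ' l : HasDerivAt (fun s => Γ s x l) (tderiv Γ t x l) t :=
    hasDerivAt_slice ((hΓ.contDiff_apply l).differentiable (by simp))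
  have h : HasDerivAt (fun s => curv Γ s x i j)
      (pd (fun y => tderiv Γ t y j) x i - pd (fun y => tderiv Γ t y i) x j
        + (mbra (Γ t x i) (tderiv Γ t x j) + mbra (tderiv Γ t x i) (Γ t x j))) t :=
    ((hasDerivAt_pd_slice (hΓ.contDiff_apply j) i).sub
      (hasDerivAt_pd_slice (hΓ.contDiff_apply i) j)).add
      ((mbraL k).hasDerivAt_of_bilinear (fun _ => hΓ' i) (fun _ => hΓ' j))
  refine h.congr_deriv ?_
  simp only [covD, mbra_comm (tderiv Γ t x i)]
  abel

end Connection

section LocalizedEnergy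

variable {n k : ℕ} {Γ : Conn n k} {φ : (Fin n → ℝ) → ℝ} {t : ℝ} {x : Fin n → ℝ}

def energyRate (Γ : Conn n k) (t : ℝ) (x : Fin n → ℝ) : ℝ :=
  ∑ i, ∑ j, minner (covD Γ t (fun y => tderiv Γ t y j) x i) (curv Γ t x i j)

def energyFlux (Γ : Conn n k) (φ : (Fin n → ℝ) → ℝ) (t : ℝ) (i : Fin n) (y : Fin n → ℝ) : ℝ :=
  (∑ j, minner (tderiv Γ t y j) (curv Γ t y i j)) * φ y ^ 2

def localizedDissipation (Γ : Conn n k) (φ : (Fin n → ℝ) → ℝ) (t : ℝ) (x : Fin n → ℝ) : ℝ :=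
  (∑ j, msq (tderiv Γ t x j)) * φ x ^ 2
    + 2 * φ x * ∑ j, minner (∑ i, pd φ x i • curv Γ t x i j) (tderiv Γ t x j)

lemma IsSmoothConn.hasDerivAt_normF2 (hΓ : IsSmoothConn Γ) :
    HasDerivAt (fun s => normF2 Γ s x) (4 * energyRate Γ t x) t := by
  have h : HasDerivAt (fun s => normF2 Γ s x) (∑ i, ∑ j,
      (minner (curv Γ t x i j) (covD Γ t (fun y => tderiv Γ t y j) x i
          - covD Γ t (fun y => tderiv Γ t y i) x j)
        + minner (covD Γ t (fun y => tderiv Γ t y j) x i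
          - covD Γ t (fun y => tderiv Γ t y i) x j) (curv Γ t x i j))) t :=
    HasDerivAt.fun_sum fun i _ => HasDerivAt.fun_sum fun j _ =>
      (minnerL k).hasDerivAt_of_bilinear (fun _ => hΓ.hasDerivAt_curv i j)
        (fun _ => hΓ.hasDerivAt_curv i j)
  refine h.congr_deriv ?_
  simp only [minner_comm (curv Γ t x _ _), ← two_mul, ← Finset.mul_sum,
    sum_minner_sub_swap (fun i j => curv_antisymm i j), energyRate]
  ring

lemma IsSmoothConn.energyRate_mul_sq_eq (hΓ : IsSmoothConn Γ) (hφ : Differentiable ℝ φ)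
    (hflow : ∀ j, tderiv Γ t x j = ∑ i, covD Γ t (fun y => curv Γ t y i j) x i) :
    energyRate Γ t x * φ x ^ 2
      = ∑ i, pd (energyFlux Γ φ t i) x i - localizedDissipation Γ φ t x := by
  have hA j : Differentiable ℝ fun y => tderiv Γ t y j :=
    ((hΓ.contDiff_tderiv j).slice t).differentiable (by simp)
  have hF i j : Differentiable ℝ fun y => curv Γ t y i j :=
    ((hΓ.contDiff_curv i j).slice t).differentiable (by simp)
  have hpdφ2 i : pd (fun y => φ y ^ 2) x i = 2 * φ x * pd φ x i := by
    simp only [sq]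
    rw [pd_mul (hφ x) (hφ x)]
    ring
  have hpdflux i : pd (energyFlux Γ φ t i) x i
      = (∑ j, (minner (covD Γ t (fun y => tderiv Γ t y j) x i) (curv Γ t x i j)
          + minner (tderiv Γ t x j) (covD Γ t (fun y => curv Γ t y i j) x i))) * φ x ^ 2
        + 2 * φ x * ((∑ j, minner (tderiv Γ t x j) (curv Γ t x i j)) * pd φ x i) := by
    unfold energyFlux
    rw [pd_mul (g := fun y => φ y ^ 2) (DifferentiableAt.fun_sum fun j _ =>
      (hA j).minner (hF i j) x) ((hφ x).pow 2), hpdφ2,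
      pd_finset_sum _ fun j _ => (hA j).minner (hF i j) x]
    simp only [pd_minner_eq_covD (hΓ.2 t x i) (hA _ x) (hF i _ x)]
    ring
  have hmsq : ∑ i, ∑ j, minner (tderiv Γ t x j) (covD Γ t (fun y => curv Γ t y i j) x i)
      = ∑ j, msq (tderiv Γ t x j) := by
    rw [Finset.sum_comm]
    simp only [← minner_sum_right, ← hflow, msq]
  have hcutoff : ∑ i, (∑ j, minner (tderiv Γ t x j) (curv Γ t x i j)) * pd φ x i
      = ∑ j, minner (∑ i, pd φ x i • curv Γ t x i j) (tderiv Γ t x j) := by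
    simp only [minner_sum_left, minner_smul_left, Finset.sum_mul, minner_comm (tderiv Γ t x _)]
    rw [Finset.sum_comm]
    simp only [mul_comm]
  simp only [hpdflux, Finset.sum_add_distrib, ← Finset.sum_mul, ← Finset.mul_sum, hmsq,
    hcutoff, energyRate, localizedDissipation]
  ring

lemma localizedDissipation_of_eq_zero (hx : φ x = 0) : localizedDissipation Γ φ t x = 0 := by
  simp [localizedDissipation, hx]

lemma IsSmoothConn.continuous_normF2 (hΓ : IsSmoothConn Γ) :
    Continuous fun p : ℝ × (Fin n → ℝ) => normF2 Γ p.1 p.2 :=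
  continuous_finsetSum _ fun i _ => continuous_finsetSum _ fun j _ =>
    ((hΓ.contDiff_curv i j).minner (hΓ.contDiff_curv i j)).continuous

lemma IsSmoothConn.continuous_energyRate (hΓ : IsSmoothConn Γ) :
    Continuous fun p : ℝ × (Fin n → ℝ) => energyRate Γ p.1 p.2 :=
  continuous_finsetSum _ fun i _ => continuous_finsetSum _ fun j _ =>
    ((hΓ.contDiff_covD (hΓ.contDiff_tderiv j) i).minner (hΓ.contDiff_curv i j)).continuous

lemma IsSmoothConn.continuous_localizedDissipation (hΓ : IsSmoothConn Γ) (hφ : ContDiff ℝ 1 φ) :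
    Continuous fun p : ℝ × (Fin n → ℝ) => localizedDissipation Γ φ p.1 p.2 := by
  have hA j := (hΓ.contDiff_tderiv j).continuous
  have hF i j := (hΓ.contDiff_curv i j).continuous
  have hdφ (i : Fin n) : Continuous fun p : ℝ × (Fin n → ℝ) => pd φ p.2 i :=
    (hφ.continuous_pd i).comp continuous_snd
  have := hφ.continuous
  unfold localizedDissipation msq
  fun_prop

lemma IsSmoothConn.integral_energyRate_mul_sq (hΓ : IsSmoothConn Γ) (hφ : ContDiff ℝ 1 φ)
    (hφc : HasCompactSupport φ)
    (hflow : ∀ x j, tderiv Γ t x j = ∑ i, covD Γ t (fun y => curv Γ t y i j) x i) :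
    ∫ x, energyRate Γ t x * φ x ^ 2 = -∫ x, localizedDissipation Γ φ t x := by
  have hflux i : ContDiff ℝ 1 (energyFlux Γ φ t i) :=
    ((ContDiff.sum fun j _ => ((hΓ.contDiff_tderiv j).minner (hΓ.contDiff_curv i j)).slice t).of_le
      (by norm_cast)).mul (hφ.pow 2)
  have hfluxc i : HasCompactSupport (energyFlux Γ φ t i) :=
    HasCompactSupport.intro hφc fun x hx => by
      simp [energyFlux, image_eq_zero_of_notMem_tsupport hx]
  have hdissip : Integrable fun x => localizedDissipation Γ φ t x :=
    (hΓ.continuous_localizedDissipation hφ |>.comp (Continuous.prodMk_right t))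
      |>.integrable_of_hasCompactSupport (HasCompactSupport.intro hφc fun x hx =>
        localizedDissipation_of_eq_zero (image_eq_zero_of_notMem_tsupport hx))
  have hdiv i := (hflux i).integrable_fderiv_apply (μ := volume) (hfluxc i) (Pi.single i 1)
  simp_rw [hΓ.energyRate_mul_sq_eq (hφ.differentiable one_ne_zero) (hflow _), pd]
  rw [integral_sub (integrable_finsetSum _ fun i _ => hdiv i) hdissip,
    integral_finsetSum _ fun i _ => hdiv i,
    Finset.sum_eq_zero fun i _ => integral_fderiv_apply_eq_zero (hflux i) (hfluxc i) _, zero_sub]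

lemma IsSmoothConn.hasDerivAt_integral_normF2_mul_sq (hΓ : IsSmoothConn Γ)
    (hφ : ContDiff ℝ 1 φ) (hφc : HasCompactSupport φ)
    (hflow : ∀ x j, tderiv Γ t x j = ∑ i, covD Γ t (fun y => curv Γ t y i j) x i) :
    HasDerivAt (fun s => ∫ x, normF2 Γ s x * φ x ^ 2)
      (-(4 * ∫ x, localizedDissipation Γ φ t x)) t := by
  have := hφ.continuous
  have := hΓ.continuous_normF2
  have := hΓ.continuous_energyRate
  have h := hasDerivAt_integral_of_forall_notMem_eq_zero (μ := volume)
    (F := fun s x => normF2 Γ s x * φ x ^ 2) (F' := fun s x => 4 * energyRate Γ s x * φ x ^ 2)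
    (by fun_prop) (by fun_prop) hφc
    (fun s x hx => by simp [image_eq_zero_of_notMem_tsupport hx])
    (fun s x => hΓ.hasDerivAt_normF2.mul_const _) t
  simpa only [mul_assoc, integral_const_mul, hΓ.integral_energyRate_mul_sq hφ hφc hflow,
    mul_neg] using h

lemma IsSmoothConn.continuous_integral_localizedDissipation (hΓ : IsSmoothConn Γ)
    (hφ : ContDiff ℝ 1 φ) (hφc : HasCompactSupport φ) :
    Continuous fun t => ∫ x, localizedDissipation Γ φ t x :=
  continuous_integral_of_forall_notMem_eq_zero (hΓ.continuous_localizedDissipation hφ) hφc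
    fun _ _ hx => localizedDissipation_of_eq_zero (image_eq_zero_of_notMem_tsupport hx)

lemma IsSmoothConn.integrable_normF2_mul_sq (hΓ : IsSmoothConn Γ) (hφ : Continuous φ)
    (hφc : HasCompactSupport φ) (t : ℝ) : Integrable fun x => normF2 Γ t x * φ x ^ 2 :=
  Continuous.integrable_of_hasCompactSupport
    ((hΓ.continuous_normF2.comp (Continuous.prodMk_right t)).mul (hφ.pow 2))
    (HasCompactSupport.intro hφc fun x hx => by simp [image_eq_zero_of_notMem_tsupport hx])

end LocalizedEnergy

theorem yangMills_localized_energy_identity_general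
    (n k : ℕ) (t1 t2 : ℝ) (ht : t1 ≤ t2)
    (Γ : Conn n k) (hsm : IsSmoothConn Γ) (hflow : IsYMFlowOn Γ (Icc t1 t2))
    (φ : (Fin n → ℝ) → ℝ) (hφ : ContDiff ℝ 1 φ) (hφc : HasCompactSupport φ) :
    1 / 4 * ∫ x : Fin n → ℝ, (normF2 Γ t1 x - normF2 Γ t2 x) * φ x ^ 2
      = ∫ t in Icc t1 t2, ∫ x : Fin n → ℝ,
          ((∑ j, msq (tderiv Γ t x j)) * φ x ^ 2
            + 2 * φ x * ∑ j, minner (∑ i, pd φ x i • curv Γ t x i j) (tderiv Γ t x j)) := by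
  have hFTC := intervalIntegral.integral_eq_sub_of_hasDerivAt
    (fun t ht' => hsm.hasDerivAt_integral_normF2_mul_sq hφ hφc
      (hflow t (by rwa [uIcc_of_le ht] at ht')))
    (((hsm.continuous_integral_localizedDissipation hφ hφc).const_mul 4).neg.intervalIntegrable
      t1 t2)
  rw [intervalIntegral.integral_neg, intervalIntegral.integral_const_mul,
    intervalIntegral.integral_of_le ht, ← integral_Icc_eq_integral_Ioc] at hFTC
  simp_rw [sub_mul]
  rw [integral_sub (hsm.integrable_normF2_mul_sq hφ.continuous hφc t1)
    (hsm.integrable_normF2_mul_sq hφ.continuous hφc t2)]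
  change _ = ∫ t in Icc t1 t2, ∫ x, localizedDissipation Γ φ t x
  linarith

/-- Localized energy identity along the Yang–Mills flow:
`(1/4)∫ (|F_{t₁}|² − |F_{t₂}|²) φ² = ∫_{t₁}^{t₂} ∫ (|∂_tΓ|²φ² + 2φ Σ_j ⟨Σ_i ∂_iφ F_{ij}, (∂_tΓ)_j⟩)`. -/
theorem yangMills_localized_energy_identity
    (n k : ℕ) (hn : 2 ≤ n) (hk : 1 ≤ k) (t1 t2 : ℝ) (ht : t1 ≤ t2)
    (Γ : Conn n k) (hsm : IsSmoothConn Γ) (hflow : IsYMFlowOn Γ (Icc t1 t2))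
    (φ : (Fin n → ℝ) → ℝ) (hφ : ContDiff ℝ 1 φ) (hφc : HasCompactSupport φ)
    (hφ0 : ∀ x, 0 ≤ φ x) :
    1 / 4 * ∫ x : Fin n → ℝ, (normF2 Γ t1 x - normF2 Γ t2 x) * φ x ^ 2
      = ∫ t in Icc t1 t2, ∫ x : Fin n → ℝ,
          ((∑ j, msq (tderiv Γ t x j)) * φ x ^ 2
            + 2 * φ x * ∑ j, minner (∑ i, pd φ x i • curv Γ t x i j) (tderiv Γ t x j)) :=
  yangMills_localized_energy_identity_general n k t1 t2 ht Γ hsm hflow φ hφ hφc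

end
end

section
/- (Closedness of the concentration set.) Let ε₀ > 0, E > 0, and let {Γ^i} be a sequence of smooth solutions of the Yang–Mills flow on ℝⁿ × [−1,0], each with spatial support contained in a fixed compact set for all times, and with sup_{i,t} (1/2)∫_{ℝⁿ} |F^i_t|² dx ≤ E. For z = (x,t) ∈ ℝⁿ × (−1,0] and r > 0 define Φ^i_z(r) := Φ_z( min{r, √(1+t)} ; Γ^i ). Then the set Σ := ⋂_{r>0} { z ∈ ℝⁿ × (−1,0] : liminf_{i→∞} Φ^i_z(r) ≥ ε₀ } is a closed subset of ℝⁿ × (−1,0]. -/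
open MeasureTheory Filter Set
open scoped ContDiff ENNReal

noncomputable section

/-! Let `z` lie in the closure of the concentration set and let `s = z.2 - ρ²` be the time
slice seen by `Φ_z(ρ)`. At a nearby point `w` use the radius `√(w.2 - s)`, which looks at the
same slice; both entropies then integrate the same `|F_s|²`, against the weighted kernels
`(w.2 - s)² G_w(·, s)` and `ρ⁴ G_z(·, s)`. These converge uniformly on the compact set carrying
the curvature, so `Φ_w ≤ c Φ_z` for every `c > 1` once `w` is close to `z`, and the
concentration inequality passes to `z`. The energy bound keeps the liminfs finite. -/

open Topology

section Curvature

variable {n k : ℕ} {Γ : Conn n k}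

lemma normF2_nonneg (t : ℝ) (x : Fin n → ℝ) : 0 ≤ normF2 Γ t x := by
  unfold normF2 msq minner
  exact Finset.sum_nonneg fun _ _ => Finset.sum_nonneg fun _ _ =>
    Finset.sum_nonneg fun _ _ => Finset.sum_nonneg fun _ _ => mul_self_nonneg _

lemma continuous_normF2 (hΓ : IsSmoothConn Γ) (t : ℝ) : Continuous (normF2 Γ t) := by
  have hslice : ContDiff ℝ ∞ (Γ t) := hΓ.1.comp (contDiff_const.prodMk contDiff_id)
  have hΓc : ∀ a, Continuous fun x => Γ t x a := fun a =>
    (continuous_apply a).comp hslice.continuous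
  have hpd : ∀ a b : Fin n, Continuous fun x => pd (fun y => Γ t y b) x a := fun a b =>
    ((contDiff_pi.1 hslice b).continuous_fderiv (by simp)).clm_apply continuous_const
  have hcurv : ∀ i j, Continuous fun x => curv Γ t x i j := by
    intro i j
    unfold curv mbra mmul
    fun_prop
  unfold normF2 msq minner
  fun_prop

lemma curv_eq_zero_of_eventuallyEq_zero {t : ℝ} {x : Fin n → ℝ} (h : Γ t =ᶠ[𝓝 x] 0)
    (i j : Fin n) : curv Γ t x i j = 0 := by
  have hpd : ∀ a b : Fin n, pd (fun y => Γ t y b) x a = 0 := by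
    intro a b
    have hb : (fun y => Γ t y b) =ᶠ[𝓝 x] fun _ => 0 := h.mono fun y hy => by simp [hy]
    simp [pd, hb.fderiv_eq]
  simp [curv, hpd, h.eq_of_nhds, mbra]

lemma normF2_eq_zero_of_notMem {K : Set (Fin n → ℝ)} (hK : IsClosed K) (hsupp : SuppIn Γ K)
    (t : ℝ) {x : Fin n → ℝ} (hx : x ∉ K) : normF2 Γ t x = 0 := by
  have hzero : Γ t =ᶠ[𝓝 x] 0 :=
    eventually_of_mem (hK.isOpen_compl.mem_nhds hx) fun y hy => hsupp t y hy
  simp [normF2, curv_eq_zero_of_eventuallyEq_zero hzero, msq, minner]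

variable {K : Set (Fin n → ℝ)} {g g₁ g₂ : (Fin n → ℝ) → ℝ}

lemma integrable_normF2_mul (hΓ : IsSmoothConn Γ) (hK : IsCompact K) (hsupp : SuppIn Γ K)
    (t : ℝ) (hg : Continuous g) : Integrable fun x => normF2 Γ t x * g x :=
  ((continuous_normF2 hΓ t).mul hg).integrable_of_hasCompactSupport <|
    HasCompactSupport.intro hK fun x hx => by
      rw [Pi.mul_apply, normF2_eq_zero_of_notMem hK.isClosed hsupp t hx, zero_mul]

lemma integral_normF2_mul_mono (hΓ : IsSmoothConn Γ) (hK : IsCompact K) (hsupp : SuppIn Γ K)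
    (t : ℝ) (hg₁ : Continuous g₁) (hg₂ : Continuous g₂) (hle : ∀ x ∈ K, g₁ x ≤ g₂ x) :
    ∫ x, normF2 Γ t x * g₁ x ≤ ∫ x, normF2 Γ t x * g₂ x := by
  refine integral_mono (integrable_normF2_mul hΓ hK hsupp t hg₁)
    (integrable_normF2_mul hΓ hK hsupp t hg₂) fun x => ?_
  by_cases hx : x ∈ K
  · exact mul_le_mul_of_nonneg_left (hle x hx) (normF2_nonneg t x)
  · simp [normF2_eq_zero_of_notMem hK.isClosed hsupp t hx]

end Curvature

section HeatKernel

variable {n : ℕ} {z : (Fin n → ℝ) × ℝ} {x : Fin n → ℝ} {t : ℝ}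

lemma gauss_nonneg (ht : t ≤ z.2) : 0 ≤ gauss z x t := by
  unfold gauss
  have : 0 ≤ 4 * Real.pi * (z.2 - t) := by nlinarith [Real.pi_pos]
  positivity

lemma gauss_pos (ht : t < z.2) : 0 < gauss z x t := by
  unfold gauss
  have : 0 < 4 * Real.pi * (z.2 - t) := by nlinarith [Real.pi_pos]
  positivity

lemma gauss_le (ht : t ≤ z.2) : gauss z x t ≤ (4 * Real.pi * (z.2 - t)) ^ (-(n : ℝ) / 2) := by
  unfold gauss
  have : 0 ≤ 4 * Real.pi * (z.2 - t) := by nlinarith [Real.pi_pos]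
  refine mul_le_of_le_one_right (by positivity) (Real.exp_le_one_iff.2 ?_)
  exact div_nonpos_of_nonpos_of_nonneg (neg_nonpos.2 (by positivity)) (by linarith)

lemma continuous_gauss (z : (Fin n → ℝ) × ℝ) (t : ℝ) : Continuous fun x => gauss z x t := by
  unfold gauss
  fun_prop

lemma continuousAt_gauss (ht : t < z.2) :
    ContinuousAt (fun p : ((Fin n → ℝ) × ℝ) × (Fin n → ℝ) => gauss p.1 p.2 t) (z, x) := by
  have hbase : 4 * Real.pi * (z.2 - t) ≠ 0 := by nlinarith [Real.pi_pos]
  unfold gauss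
  refine ContinuousAt.mul ?_ ?_
  · exact (ContinuousAt.rpow_const (by fun_prop) (Or.inl hbase))
  · exact Real.continuous_exp.continuousAt.comp <| ContinuousAt.div (by fun_prop) (by fun_prop)
      (by simp; linarith)

end HeatKernel

lemma eventually_forall_sq_mul_gauss_lt {n : ℕ} {K : Set (Fin n → ℝ)} (hK : IsCompact K)
    {z : (Fin n → ℝ) × ℝ} {s c : ℝ} (hs : s < z.2) (hc : 1 < c) :
    ∀ᶠ w in 𝓝 z, ∀ x ∈ K, (w.2 - s) ^ 2 * gauss w x s < c * ((z.2 - s) ^ 2 * gauss z x s) := by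
  refine hK.eventually_forall_of_forall_eventually fun y _ => ?_
  have hlhs : ContinuousAt (fun p : ((Fin n → ℝ) × ℝ) × (Fin n → ℝ) =>
      (p.1.2 - s) ^ 2 * gauss p.1 p.2 s) (z, y) :=
    ContinuousAt.mul (by fun_prop) (continuousAt_gauss hs)
  have hrhs : ContinuousAt (fun p : ((Fin n → ℝ) × ℝ) × (Fin n → ℝ) =>
      c * ((z.2 - s) ^ 2 * gauss z p.2 s)) (z, y) :=
    (((continuous_gauss z s).comp continuous_snd).const_mul _).const_mul _ |>.continuousAt
  refine hlhs.eventually_lt hrhs (lt_mul_of_one_lt_left ?_ hc)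
  have : 0 < z.2 - s := sub_pos.2 hs
  have := gauss_pos (x := y) hs
  positivity

lemma liminf_const_mul_of_nonneg {ι : Type*} {f : Filter ι} [f.NeBot] {u : ι → ℝ} {c : ℝ}
    (hc : 0 ≤ c) (hbdd : f.IsBoundedUnder (· ≥ ·) u) (hcobdd : f.IsCoboundedUnder (· ≥ ·) u) :
    liminf (fun i => c * u i) f = c * liminf u f :=
  ((monotone_mul_left_of_nonneg hc).map_liminf_of_continuousAt u
    (continuous_const_mul c).continuousAt hcobdd hbdd).symm

section Entropy

variable {n k : ℕ} {Γ : Conn n k} {K : Set (Fin n → ℝ)} {z w : (Fin n → ℝ) × ℝ} {s : ℝ}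

lemma Phi_nonneg (Γ : Conn n k) (z : (Fin n → ℝ) × ℝ) (R : ℝ) : 0 ≤ Phi Γ z R :=
  mul_nonneg (by positivity) <| integral_nonneg fun x =>
    mul_nonneg (normF2_nonneg _ x) (gauss_nonneg (by nlinarith))

lemma Phi_sqrt_sub (hs : s ≤ z.2) :
    Phi Γ z √(z.2 - s) = 1 / 2 * ∫ x, normF2 Γ s x * ((z.2 - s) ^ 2 * gauss z x s) := by
  have hsq : √(z.2 - s) ^ 2 = z.2 - s := Real.sq_sqrt (sub_nonneg.2 hs)
  have h4 : √(z.2 - s) ^ 4 = (z.2 - s) ^ 2 := by rw [show 4 = 2 * 2 from rfl, pow_mul, hsq]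
  rw [Phi, h4, hsq, sub_sub_cancel]
  simp_rw [mul_left_comm (normF2 Γ s _)]
  rw [integral_const_mul]
  ring

lemma Phi_sqrt_sub_le_mul_integral_normF2 (hΓ : IsSmoothConn Γ) (hK : IsCompact K)
    (hsupp : SuppIn Γ K) (hs : s ≤ z.2) :
    Phi Γ z √(z.2 - s) ≤
      (z.2 - s) ^ 2 / 2 * (4 * Real.pi * (z.2 - s)) ^ (-(n : ℝ) / 2) * ∫ x, normF2 Γ s x := by
  rw [Phi_sqrt_sub hs]
  calc _ ≤ 1 / 2 * ∫ x, normF2 Γ s x *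
        ((z.2 - s) ^ 2 * (4 * Real.pi * (z.2 - s)) ^ (-(n : ℝ) / 2)) :=
        mul_le_mul_of_nonneg_left (integral_normF2_mul_mono hΓ hK hsupp s
          ((continuous_gauss z s).const_mul _) continuous_const
          fun x _ => mul_le_mul_of_nonneg_left (gauss_le hs) (sq_nonneg _)) (by norm_num)
    _ = _ := by rw [integral_mul_const]; ring

lemma Phi_sqrt_sub_le_mul_of_forall_le (hΓ : IsSmoothConn Γ) (hK : IsCompact K)
    (hsupp : SuppIn Γ K) (hw : s ≤ w.2) (hz : s ≤ z.2) {c : ℝ}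
    (hle : ∀ x ∈ K, (w.2 - s) ^ 2 * gauss w x s ≤ c * ((z.2 - s) ^ 2 * gauss z x s)) :
    Phi Γ w √(w.2 - s) ≤ c * Phi Γ z √(z.2 - s) := by
  rw [Phi_sqrt_sub hw, Phi_sqrt_sub hz]
  calc _ ≤ 1 / 2 * ∫ x, normF2 Γ s x * (c * ((z.2 - s) ^ 2 * gauss z x s)) :=
        mul_le_mul_of_nonneg_left (integral_normF2_mul_mono hΓ hK hsupp s
          ((continuous_gauss w s).const_mul _) (((continuous_gauss z s).const_mul _).const_mul c)
          hle) (by norm_num)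
    _ = _ := by
      simp_rw [mul_left_comm (normF2 Γ s _) c]
      rw [integral_const_mul]
      ring

end Entropy

lemma le_liminf_Phi_of_frequently {n k : ℕ} {Γi : ℕ → Conn n k}
    (hsm : ∀ i, IsSmoothConn (Γi i)) {K : Set (Fin n → ℝ)} (hK : IsCompact K)
    (hsupp : ∀ i, SuppIn (Γi i) K) {z : (Fin n → ℝ) × ℝ} {s B ε0 : ℝ} (hs : s < z.2)
    (hen : ∀ i, ∫ x, normF2 (Γi i) s x ≤ B)
    (hfreq : ∃ᶠ w in 𝓝 z, ε0 ≤ liminf (fun i => Phi (Γi i) w √(w.2 - s)) atTop) :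
    ε0 ≤ liminf (fun i => Phi (Γi i) z √(z.2 - s)) atTop := by
  set u := fun i => Phi (Γi i) z √(z.2 - s)
  have hu0 : ∀ i, 0 ≤ u i := fun i => Phi_nonneg _ _ _
  obtain ⟨M, hM⟩ : ∃ M, ∀ i, u i ≤ M := ⟨_, fun i =>
    (Phi_sqrt_sub_le_mul_integral_normF2 (hsm i) hK (hsupp i) hs.le).trans <|
      mul_le_mul_of_nonneg_left (hen i) (by positivity)⟩
  have hbdd : atTop.IsBoundedUnder (· ≥ ·) u := isBoundedUnder_of ⟨0, hu0⟩
  have hcobdd : atTop.IsCoboundedUnder (· ≥ ·) u := (isBoundedUnder_of ⟨M, hM⟩).isCoboundedUnder_ge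
  refine (le_iff_forall_one_lt_le_mul₀ (le_liminf_of_le hcobdd (.of_forall hu0))).2 fun c hc => ?_
  have hc0 : 0 ≤ c := zero_le_one.trans hc.le
  have hnear : ∀ᶠ w in 𝓝 z, s < w.2 := continuousAt_snd.eventually_const_lt hs
  obtain ⟨w, hw, hws, hwK⟩ :=
    (hfreq.and_eventually (hnear.and (eventually_forall_sq_mul_gauss_lt hK hs hc))).exists
  have hcompare : ∀ i, Phi (Γi i) w √(w.2 - s) ≤ c * u i := fun i =>
    Phi_sqrt_sub_le_mul_of_forall_le (hsm i) hK (hsupp i) hws.le hs.le fun x hx => (hwK x hx).le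
  calc ε0 ≤ liminf (fun i => Phi (Γi i) w √(w.2 - s)) atTop := hw
    _ ≤ liminf (fun i => c * u i) atTop :=
      liminf_le_liminf (.of_forall hcompare) (isBoundedUnder_of ⟨0, fun i => Phi_nonneg _ _ _⟩)
        (isBoundedUnder_of ⟨c * M, fun i =>
          mul_le_mul_of_nonneg_left (hM i) hc0⟩).isCoboundedUnder_ge
    _ = liminf u atTop * c := by rw [liminf_const_mul_of_nonneg hc0 hbdd hcobdd, mul_comm]

theorem concentration_set_closed_general
    (n k : ℕ) (ε0 E : ℝ)
    (Γi : ℕ → Conn n k)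
    (hsm : ∀ i, IsSmoothConn (Γi i))
    (K : Set (Fin n → ℝ)) (hK : IsCompact K) (hsupp : ∀ i, SuppIn (Γi i) K)
    (hen : ∀ i, ∀ t ∈ Icc (-1 : ℝ) 0, 1 / 2 * ∫ x : Fin n → ℝ, normF2 (Γi i) t x ≤ E) :
    ∃ C : Set ((Fin n → ℝ) × ℝ), IsClosed C ∧
      {z : (Fin n → ℝ) × ℝ | z.2 ∈ Ioc (-1 : ℝ) 0 ∧
          ∀ r : ℝ, 0 < r →
            ε0 ≤ liminf (fun i => Phi (Γi i) z (min r (Real.sqrt (1 + z.2)))) atTop}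
        = C ∩ {z : (Fin n → ℝ) × ℝ | z.2 ∈ Ioc (-1 : ℝ) 0} := by
  refine ⟨closure _, isClosed_closure, Subset.antisymm (fun z hz => ⟨subset_closure hz, hz.1⟩) ?_⟩
  rintro z ⟨hz_closure, hz⟩
  refine ⟨hz, fun r hr => ?_⟩
  set ρ := min r √(1 + z.2)
  have hρ : 0 < ρ := lt_min hr (Real.sqrt_pos.2 (by linarith [hz.1]))
  have hρ_le : ρ ^ 2 ≤ 1 + z.2 :=
    (pow_le_pow_left₀ hρ.le (min_le_right _ _) 2).trans_eq (Real.sq_sqrt (by linarith [hz.1]))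
  set s := z.2 - ρ ^ 2
  have hs : s ∈ Icc (-1 : ℝ) 0 := ⟨by linarith, by linarith [hz.2, sq_nonneg ρ]⟩
  have hsz : s < z.2 := by linarith [pow_pos hρ 2]
  rw [show ρ = √(z.2 - s) by rw [sub_sub_cancel, Real.sqrt_sq hρ.le]]
  refine le_liminf_Phi_of_frequently hsm hK hsupp hsz (B := 2 * E)
    (fun i => by linarith [hen i s hs]) ?_
  refine (mem_closure_iff_frequently.1 hz_closure).mp <|
    (continuousAt_snd.eventually_const_lt hsz).mono fun w hws hw_mem => ?_
  have hmin : min √(w.2 - s) √(1 + w.2) = √(w.2 - s) :=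
    min_eq_left (Real.sqrt_le_sqrt (by linarith [hs.1]))
  simpa [hmin] using hw_mem.2 _ (Real.sqrt_pos.2 (sub_pos.2 hws))

/-- (Closedness of the concentration set.) For a sequence of smooth,
compactly supported solutions of Yang–Mills flow on `ℝⁿ × [−1,0]` with uniformly bounded
energy, the concentration set
`Σ = ⋂_{r>0} {z : liminf_i Φ^i_z(r) ≥ ε₀}` is a closed subset of `ℝⁿ × (−1,0]`. -/
theorem concentration_set_closed
    (n k : ℕ) (hn : 2 ≤ n) (hk : 1 ≤ k) (ε0 E : ℝ) (hε0 : 0 < ε0) (hE : 0 < E)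
    (Γi : ℕ → Conn n k)
    (hsm : ∀ i, IsSmoothConn (Γi i))
    (hflow : ∀ i, IsYMFlowOn (Γi i) (Icc (-1) 0))
    (K : Set (Fin n → ℝ)) (hK : IsCompact K) (hsupp : ∀ i, SuppIn (Γi i) K)
    (hen : ∀ i, ∀ t ∈ Icc (-1 : ℝ) 0, 1 / 2 * ∫ x : Fin n → ℝ, normF2 (Γi i) t x ≤ E) :
    ∃ C : Set ((Fin n → ℝ) × ℝ), IsClosed C ∧
      {z : (Fin n → ℝ) × ℝ | z.2 ∈ Ioc (-1 : ℝ) 0 ∧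
          ∀ r : ℝ, 0 < r →
            ε0 ≤ liminf (fun i => Phi (Γi i) z (min r (Real.sqrt (1 + z.2)))) atTop}
        = C ∩ {z : (Fin n → ℝ) × ℝ | z.2 ∈ Ioc (-1 : ℝ) 0} :=
  concentration_set_closed_general n k ε0 E Γi hsm K hK hsupp hen
end
end

section
/- Let n ≥ 3, let f : ℝⁿ × ℝ → [0,∞) be Lebesgue integrable, and let Σ ⊂ ℝⁿ × ℝ be a closed set of Lebesgue measure zero. Then 𝒫^{n−2}( { z ∈ Σ : limsup_{R→0⁺} R^{2−n} ∫_{P_R(z)} f(x,t) dx dt > 0 } ) = 0; in particular, for 𝒫^{n−2}-almost every z ∈ Σ, lim_{R→0⁺} R^{2−n} ∫_{P_R(z)} f(x,t) dx dt = 0. -/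
/-!
Vitali covering in the parabolic metric space, where `P_R(z)` is exactly the metric ball of
radius `R`. If every point of `A` is the centre of arbitrarily small balls with
`r ^ d ≤ μ (ball x r)`, a disjoint subfamily of such balls of radii `≤ ρ` has `∑ rᵢ ^ d ≤ μ univ`,
and its fourfold enlargements cover `A` with diameters `≤ 8ρ`; hence `μH[d] A ≤ 8 ^ d * μ univ`.
Take `d = n - 2` and `μ = ε⁻¹ f dx dt` restricted to the `δ`-neighbourhood of `Σ`, at the points
of `Σ` where `R^{2-n} ∫_{P_R(z)} f ≥ ε` for arbitrarily small `R`. As `Σ` is closed and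
Lebesgue-null, the `f`-mass of its `δ`-neighbourhood tends to `0` with `δ`, so these sets are
`𝒫^{n-2}`-null, and a countable union over `ε = 1/(k+1)` covers both exceptional sets.
-/

open MeasureTheory Filter Set Topology
open scoped ENNReal

noncomputable section

/-- `ℝⁿ × ℝ` equipped with the parabolic metric
`ϱ((x,t),(y,s)) = max {|x−y|, √|t−s|}`. -/
def PM (n : ℕ) : Type := EuclideanSpace ℝ (Fin n) × ℝ

private lemma sqrt_add_le (a b : ℝ) (ha : 0 ≤ a) (hb : 0 ≤ b) :
    Real.sqrt (a + b) ≤ Real.sqrt a + Real.sqrt b := by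
  have h : a + b ≤ (Real.sqrt a + Real.sqrt b) ^ 2 := by
    nlinarith [Real.sq_sqrt ha, Real.sq_sqrt hb, Real.sqrt_nonneg a, Real.sqrt_nonneg b]
  calc Real.sqrt (a + b) ≤ Real.sqrt ((Real.sqrt a + Real.sqrt b) ^ 2) := Real.sqrt_le_sqrt h
    _ = Real.sqrt a + Real.sqrt b := Real.sqrt_sq (by positivity)

noncomputable instance PM.metricSpace (n : ℕ) : MetricSpace (PM n) where
  dist p q := max (dist p.1 q.1) (Real.sqrt (dist p.2 q.2))
  dist_self p := by simp
  dist_comm p q := by simp [dist_comm]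
  dist_triangle p q r := by
    refine max_le ?_ ?_
    · exact (dist_triangle p.1 q.1 r.1).trans
        (add_le_add (le_max_left _ _) (le_max_left _ _))
    · refine le_trans (Real.sqrt_le_sqrt (dist_triangle p.2 q.2 r.2)) ?_
      exact le_trans (sqrt_add_le _ _ dist_nonneg dist_nonneg)
        (add_le_add (le_max_right _ _) (le_max_right _ _))
  eq_of_dist_eq_zero := by
    intro p q h
    have h1 : dist p.1 q.1 = 0 :=
      le_antisymm (h ▸ le_max_left _ _) dist_nonneg
    have h2 : Real.sqrt (dist p.2 q.2) = 0 :=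
      le_antisymm (h ▸ le_max_right _ _) (Real.sqrt_nonneg _)
    have h2' : dist p.2 q.2 = 0 :=
      le_antisymm (Real.sqrt_eq_zero'.mp h2) dist_nonneg
    have e1 : p.1 = q.1 := dist_eq_zero.mp h1
    have e2 : p.2 = q.2 := dist_eq_zero.mp h2'
    exact Prod.ext e1 e2

noncomputable instance PM.measurableSpace (n : ℕ) : MeasurableSpace (PM n) := borel _

instance PM.borelSpace (n : ℕ) : BorelSpace (PM n) := ⟨rfl⟩

/-- The identity map from `ℝⁿ × ℝ` (with its standard structures) to the parabolic
metric space `PM n`; `𝒫^ℓ(Ω)` is formalized as `μH[ℓ] (toPM n '' Ω)`. -/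
def toPM (n : ℕ) : EuclideanSpace ℝ (Fin n) × ℝ → PM n := fun p => p

/-- The parabolic ball `P_r(z₀) = {(x,t) : |x−x₀| < r, |t−t₀| < r²}`. -/
def pball {n : ℕ} (z : EuclideanSpace ℝ (Fin n) × ℝ) (r : ℝ) :
    Set (EuclideanSpace ℝ (Fin n) × ℝ) :=
  {p | dist p.1 z.1 < r ∧ |p.2 - z.2| < r ^ 2}

open Metric

section VitaliCovering

variable {X : Type*} [MetricSpace X]

lemma ediam_closedBall_le_ofReal (x : X) (r : ℝ) :
    ediam (closedBall x r) ≤ ENNReal.ofReal (2 * r) :=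
  ediam_le_of_forall_dist_le fun y hy z hz => by
    linarith [dist_triangle_right y z x, mem_closedBall.1 hy, mem_closedBall.1 hz]

lemma ediam_closedBall_rpow_le (x : X) {r d : ℝ} (hd : 0 ≤ d) :
    ediam (closedBall x (4 * r)) ^ d ≤ 8 ^ d * ENNReal.ofReal r ^ d :=
  calc ediam (closedBall x (4 * r)) ^ d ≤ ENNReal.ofReal (8 * r) ^ d := by
        rw [show 8 * r = 2 * (4 * r) by ring]
        exact ENNReal.rpow_le_rpow (ediam_closedBall_le_ofReal x _) hd
    _ = 8 ^ d * ENNReal.ofReal r ^ d := by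
        rw [ENNReal.ofReal_mul (by norm_num), ENNReal.mul_rpow_of_nonneg _ _ hd,
          ENNReal.ofReal_ofNat]

variable [TopologicalSpace.SeparableSpace X] [MeasurableSpace X]

lemma exists_countable_disjoint_balls_enlargement_cover (μ : Measure X) {d ρ : ℝ} {A : Set X}
    (hA : ∀ x ∈ A, ∃ᶠ r in 𝓝[>] 0, ENNReal.ofReal r ^ d ≤ μ (ball x r)) (hρ : 0 < ρ) :
    ∃ u : Set (X × ℝ), u.Countable ∧ u.PairwiseDisjoint (fun a => ball a.1 a.2) ∧
      (∀ a ∈ u, 0 < a.2 ∧ a.2 ≤ ρ ∧ ENNReal.ofReal a.2 ^ d ≤ μ (ball a.1 a.2)) ∧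
      A ⊆ ⋃ a ∈ u, closedBall a.1 (4 * a.2) := by
  set t : Set (X × ℝ) := {a | 0 < a.2 ∧ a.2 ≤ ρ ∧ ENNReal.ofReal a.2 ^ d ≤ μ (ball a.1 a.2)}
  obtain ⟨u, hut, hdisj, hcover⟩ :=
    Vitali.exists_disjoint_subfamily_covering_enlargement_closedBall t Prod.fst Prod.snd ρ
      (fun a ha => ha.2.1) 4 (by norm_num)
  refine ⟨u, ?_, hdisj.mono fun a => ball_subset_closedBall, fun a ha => hut ha, ?_⟩
  · exact hdisj.countable_of_nonempty_interior fun a ha =>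
      ⟨a.1, ball_subset_interior_closedBall (mem_ball_self (hut ha).1)⟩
  · intro x hx
    obtain ⟨r, ⟨hrμ, hr⟩, hrρ⟩ :=
      ((hA x hx).and_eventually self_mem_nhdsWithin).and_eventually
        (eventually_nhdsWithin_of_eventually_nhds (eventually_le_nhds hρ)) |>.exists
    obtain ⟨b, hbu, hsub⟩ := hcover (x, r) ⟨hr, hrρ, hrμ⟩
    exact mem_biUnion hbu (hsub (mem_closedBall_self hr.le))

theorem hausdorffMeasure_le_of_frequently_rpow_le_measure_ball [BorelSpace X] (μ : Measure X)
    {d : ℝ} (hd : 0 ≤ d) {A : Set X}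
    (hA : ∀ x ∈ A, ∃ᶠ r in 𝓝[>] 0, ENNReal.ofReal r ^ d ≤ μ (ball x r)) :
    μH[d] A ≤ 8 ^ d * μ univ := by
  choose u hu_count hu_disj hu_mem hu_cover using fun m : ℕ =>
    exists_countable_disjoint_balls_enlargement_cover μ hA (Nat.one_div_pos_of_nat (n := m))
  have : ∀ m, Countable (u m) := fun m => (hu_count m).to_subtype
  have hsum : ∀ m, ∑' a : u m, ediam (closedBall a.1.1 (4 * a.1.2)) ^ d ≤ 8 ^ d * μ univ :=
    fun m => calc
      ∑' a : u m, ediam (closedBall a.1.1 (4 * a.1.2)) ^ d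
          ≤ ∑' a : u m, 8 ^ d * ENNReal.ofReal a.1.2 ^ d :=
        ENNReal.tsum_le_tsum fun a => ediam_closedBall_rpow_le _ hd
      _ ≤ 8 ^ d * ∑' a : u m, μ (ball a.1.1 a.1.2) := by
        rw [ENNReal.tsum_mul_left]
        exact mul_le_mul_right (ENNReal.tsum_le_tsum fun a : u m => (hu_mem m a.1 a.2).2.2) _
      _ = 8 ^ d * μ (⋃ a ∈ u m, ball a.1 a.2) := by
        rw [measure_biUnion (hu_count m) (hu_disj m) fun a _ => measurableSet_ball]
      _ ≤ 8 ^ d * μ univ := by gcongr; exact subset_univ _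
  have hdiam_tendsto : Tendsto (fun m : ℕ => ENNReal.ofReal (8 * (1 / ((m : ℝ) + 1))))
      atTop (𝓝 0) := by
    simpa using (ENNReal.tendsto_ofReal (tendsto_one_div_add_atTop_nhds_zero_nat.const_mul 8))
  calc μH[d] A ≤ liminf (fun m => ∑' a : u m, ediam (closedBall a.1.1 (4 * a.1.2)) ^ d) atTop :=
        Measure.hausdorffMeasure_le_liminf_tsum d A _ hdiam_tendsto
          (fun m (a : u m) => closedBall a.1.1 (4 * a.1.2))
          (Eventually.of_forall fun m a => (ediam_closedBall_le_ofReal _ _).trans <|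
            ENNReal.ofReal_le_ofReal (by linarith [(hu_mem m a.1 a.2).2.1]))
          (Eventually.of_forall fun m => by simpa only [biUnion_eq_iUnion] using hu_cover m)
    _ ≤ 8 ^ d * μ univ := liminf_le_of_frequently_le' (Frequently.of_forall hsum)

end VitaliCovering

lemma PM.dist_def {n : ℕ} (p q : PM n) :
    dist p q = max (dist p.1 q.1) (Real.sqrt (dist p.2 q.2)) := rfl

lemma preimage_toPM_ball {n : ℕ} (z : EuclideanSpace ℝ (Fin n) × ℝ) {r : ℝ} (hr : 0 < r) :
    toPM n ⁻¹' ball (toPM n z) r = pball z r := by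
  ext p
  rw [mem_preimage, mem_ball, PM.dist_def, max_lt_iff, Real.sqrt_lt' hr, Real.dist_eq]
  rfl

lemma continuous_toPM (n : ℕ) : Continuous (toPM n) := by
  rw [Metric.continuous_iff]
  intro z ε hε
  refine ⟨min ε (ε ^ 2), by positivity, fun p hp => ?_⟩
  rw [Prod.dist_eq, lt_min_iff, max_lt_iff, max_lt_iff] at hp
  rw [PM.dist_def, max_lt_iff, Real.sqrt_lt' hε]
  exact ⟨hp.1.1, hp.2.2⟩

instance PM.separableSpace (n : ℕ) : TopologicalSpace.SeparableSpace (PM n) :=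
  (Function.Surjective.denseRange (f := toPM n) fun p => ⟨p, rfl⟩).separableSpace
    (continuous_toPM n)

lemma pball_subset_thickening {n : ℕ} {S : Set (EuclideanSpace ℝ (Fin n) × ℝ)}
    {z : EuclideanSpace ℝ (Fin n) × ℝ} (hz : z ∈ S) {r : ℝ} (hr : r ≤ 1) :
    pball z r ⊆ thickening r S := by
  intro p hp
  have hr0 : 0 < r := dist_nonneg.trans_lt hp.1
  refine mem_thickening_iff.2 ⟨z, hz, ?_⟩
  rw [Prod.dist_eq, Real.dist_eq]
  exact max_lt hp.1 (hp.2.trans_le (by nlinarith))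

lemma exists_pos_frequently_le_of_pos_limsup {α : Type*} {l : Filter α} [l.NeBot] {g : α → ℝ}
    (hg : 0 ≤ᶠ[l] g) (h : 0 < limsup g l) : ∃ ε > 0, ∃ᶠ x in l, ε ≤ g x := by
  obtain ⟨ε, hε, hεlt⟩ := exists_between h
  exact ⟨ε, hε, (frequently_lt_of_lt_limsup (isCoboundedUnder_le_of_eventually_le l hg) hεlt).mono
    fun _ => le_of_lt⟩

lemma exists_pos_frequently_le_of_not_tendsto_zero {α : Type*} {l : Filter α} {g : α → ℝ}
    (hg : 0 ≤ᶠ[l] g) (h : ¬Tendsto g l (𝓝 0)) : ∃ ε > 0, ∃ᶠ x in l, ε ≤ g x := by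
  obtain ⟨ε, hε, hfreq⟩ : ∃ ε > 0, ∃ᶠ x in l, ε ≤ dist (g x) 0 := by
    simpa [Metric.tendsto_nhds] using h
  refine ⟨ε, hε, (hfreq.and_eventually hg).mono fun x ⟨hεx, hx⟩ => ?_⟩
  rwa [Real.dist_eq, sub_zero, abs_of_nonneg (hx : 0 ≤ g x)] at hεx

def parabolicDensity {n : ℕ} (f : EuclideanSpace ℝ (Fin n) × ℝ → ℝ)
    (z : EuclideanSpace ℝ (Fin n) × ℝ) (R : ℝ) : ℝ :=
  R ^ ((2 : ℝ) - n) * ∫ p in pball z R, f p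

section ParabolicDensity

variable {n : ℕ} {f : EuclideanSpace ℝ (Fin n) × ℝ → ℝ}

lemma isOpen_pball (z : EuclideanSpace ℝ (Fin n) × ℝ) {r : ℝ} (hr : 0 < r) :
    IsOpen (pball z r) :=
  preimage_toPM_ball z hr ▸ isOpen_ball.preimage (continuous_toPM n)

lemma parabolicDensity_nonneg (hf0 : ∀ p, 0 ≤ f p) (z : EuclideanSpace ℝ (Fin n) × ℝ) {R : ℝ}
    (hR : 0 ≤ R) : 0 ≤ parabolicDensity f z R :=
  mul_nonneg (Real.rpow_nonneg hR _) (integral_nonneg hf0)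

lemma rpow_mul_le_withDensity_pball (hf0 : ∀ p, 0 ≤ f p) (hfint : Integrable f)
    {z : EuclideanSpace ℝ (Fin n) × ℝ} {ε R : ℝ} (hR : 0 < R) (h : ε ≤ parabolicDensity f z R) :
    ENNReal.ofReal R ^ ((n : ℝ) - 2) * ENNReal.ofReal ε ≤
      volume.withDensity (fun p => ENNReal.ofReal (f p)) (pball z R) := by
  have hRpow : 0 < R ^ ((n : ℝ) - 2) := Real.rpow_pos_of_pos hR _
  have hcancel : R ^ ((n : ℝ) - 2) * R ^ ((2 : ℝ) - n) = 1 := by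
    rw [← Real.rpow_add hR]; norm_num
  rw [withDensity_apply _ (isOpen_pball z hR).measurableSet,
    ← ofReal_integral_eq_lintegral_ofReal hfint.integrableOn (ae_of_all _ hf0),
    ENNReal.ofReal_rpow_of_pos hR, ← ENNReal.ofReal_mul hRpow.le]
  refine ENNReal.ofReal_le_ofReal ?_
  calc R ^ ((n : ℝ) - 2) * ε ≤ R ^ ((n : ℝ) - 2) * parabolicDensity f z R := by gcongr
    _ = ∫ p in pball z R, f p := by rw [parabolicDensity, ← mul_assoc, hcancel, one_mul]

lemma hausdorffMeasure_frequently_le_parabolicDensity_le (hn : 2 ≤ n) (hf0 : ∀ p, 0 ≤ f p)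
    (hfint : Integrable f) {S : Set (EuclideanSpace ℝ (Fin n) × ℝ)} {ε δ : ℝ} (hε : 0 < ε)
    (hδ : 0 < δ) :
    μH[(n : ℝ) - 2] (toPM n '' {z ∈ S | ∃ᶠ R in 𝓝[>] 0, ε ≤ parabolicDensity f z R}) ≤
      8 ^ ((n : ℝ) - 2) * (volume.withDensity (fun p => ENNReal.ofReal (f p))
        (thickening δ S) / ENNReal.ofReal ε) := by
  set ν := volume.withDensity (fun p => ENNReal.ofReal (f p))
  set μ : Measure (PM n) := (ENNReal.ofReal ε)⁻¹ • (ν.restrict (thickening δ S)).map (toPM n)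
  have hmeas : Measurable (toPM n) := (continuous_toPM n).measurable
  have hμ : ∀ s, MeasurableSet s → μ s = ν (toPM n ⁻¹' s ∩ thickening δ S) / ENNReal.ofReal ε :=
    fun s hs => by
      rw [Measure.smul_apply, Measure.map_apply hmeas hs, Measure.restrict_apply (hmeas hs),
        smul_eq_mul, ENNReal.div_eq_inv_mul]
  have hd : (0 : ℝ) ≤ n - 2 := by
    rw [sub_nonneg]; exact_mod_cast hn
  calc _ ≤ 8 ^ ((n : ℝ) - 2) * μ univ := by
        refine hausdorffMeasure_le_of_frequently_rpow_le_measure_ball μ hd ?_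
        rintro _ ⟨z, ⟨hzS, hz⟩, rfl⟩
        refine (hz.and_eventually (Ioo_mem_nhdsGT (lt_min hδ one_pos))).mono
          fun R ⟨hR, hR0, hRδ⟩ => ?_
        have hsub : pball z R ⊆ thickening δ S :=
          (pball_subset_thickening hzS (hRδ.le.trans (min_le_right _ _))).trans
            (thickening_mono (hRδ.le.trans (min_le_left _ _)) S)
        rw [hμ _ measurableSet_ball, preimage_toPM_ball z hR0, inter_eq_left.2 hsub,
          ENNReal.le_div_iff_mul_le (Or.inl (ENNReal.ofReal_pos.2 hε).ne')
            (Or.inl ENNReal.ofReal_ne_top)]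
        exact rpow_mul_le_withDensity_pball hf0 hfint hR0 hR
    _ = _ := by rw [hμ _ MeasurableSet.univ, preimage_univ, univ_inter]

variable {S : Set (EuclideanSpace ℝ (Fin n) × ℝ)}

lemma hausdorffMeasure_frequently_le_parabolicDensity_eq_zero (hn : 2 ≤ n)
    (hf0 : ∀ p, 0 ≤ f p) (hfint : Integrable f) (hScl : IsClosed S) (hSnull : volume S = 0)
    {ε : ℝ} (hε : 0 < ε) :
    μH[(n : ℝ) - 2] (toPM n '' {z ∈ S | ∃ᶠ R in 𝓝[>] 0, ε ≤ parabolicDensity f z R}) = 0 := by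
  set ν := volume.withDensity (fun p => ENNReal.ofReal (f p))
  have : IsFiniteMeasure ν := isFiniteMeasure_withDensity_ofReal hfint.2
  have hνS : ν S = 0 := withDensity_absolutelyContinuous _ _ hSnull
  have hthick : Tendsto (fun δ => 8 ^ ((n : ℝ) - 2) * (ν (thickening δ S) / ENNReal.ofReal ε))
      (𝓝[>] 0) (𝓝 0) := by
    have h := tendsto_measure_thickening_of_isClosed (μ := ν) ⟨1, one_pos, measure_ne_top _ _⟩ hScl
    rw [hνS] at h
    simpa using ENNReal.Tendsto.const_mul
      (ENNReal.Tendsto.div_const h (Or.inr (ENNReal.ofReal_pos.2 hε).ne'))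
      (Or.inr (ENNReal.rpow_ne_top_of_ne_zero (by norm_num) (by norm_num)))
  exact le_antisymm (ge_of_tendsto hthick (eventually_mem_nhdsWithin.mono fun δ hδ =>
    hausdorffMeasure_frequently_le_parabolicDensity_le hn hf0 hfint hε hδ)) zero_le

lemma hausdorffMeasure_exists_frequently_le_parabolicDensity_eq_zero (hn : 2 ≤ n)
    (hf0 : ∀ p, 0 ≤ f p) (hfint : Integrable f) (hScl : IsClosed S) (hSnull : volume S = 0) :
    μH[(n : ℝ) - 2] (toPM n ''
      {z ∈ S | ∃ ε > 0, ∃ᶠ R in 𝓝[>] 0, ε ≤ parabolicDensity f z R}) = 0 := by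
  refine measure_mono_null ?_ (measure_iUnion_null fun k : ℕ =>
    hausdorffMeasure_frequently_le_parabolicDensity_eq_zero hn hf0 hfint hScl hSnull
      (Nat.one_div_pos_of_nat (n := k)))
  rintro _ ⟨z, ⟨hzS, ε, hε, hz⟩, rfl⟩
  obtain ⟨k, hk⟩ := exists_nat_one_div_lt hε
  exact mem_iUnion.2 ⟨k, z, ⟨hzS, hz.mono fun R hR => hk.le.trans hR⟩, rfl⟩

end ParabolicDensity

/-- If `f ≥ 0` is integrable on `ℝⁿ × ℝ` and `Σ` is a closed Lebesgue-null
set, then the set of `z ∈ Σ` where `limsup_{R→0⁺} R^{2−n} ∫_{P_R(z)} f > 0` is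
`𝒫^{n−2}`-null; in particular for `𝒫^{n−2}`-a.e. `z ∈ Σ`,
`lim_{R→0⁺} R^{2−n} ∫_{P_R(z)} f = 0`. -/
theorem parabolic_density_vanishes_ae
    (n : ℕ) (hn : 3 ≤ n) (f : EuclideanSpace ℝ (Fin n) × ℝ → ℝ)
    (hf0 : ∀ p, 0 ≤ f p) (hfint : Integrable f volume)
    (S : Set (EuclideanSpace ℝ (Fin n) × ℝ)) (hScl : IsClosed S) (hSnull : volume S = 0) :
    μH[(n : ℝ) - 2] (toPM n ''
        {z ∈ S | 0 < limsup (fun R : ℝ => R ^ ((2 : ℝ) - n) * ∫ p in pball z R, f p)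
          (nhdsWithin 0 (Ioi 0))}) = 0
    ∧ μH[(n : ℝ) - 2] (toPM n ''
        {z ∈ S | ¬ Tendsto (fun R : ℝ => R ^ ((2 : ℝ) - n) * ∫ p in pball z R, f p)
          (nhdsWithin 0 (Ioi 0)) (nhds 0)}) = 0 := by
  have hnull := hausdorffMeasure_exists_frequently_le_parabolicDensity_eq_zero (by omega) hf0
    hfint hScl hSnull
  have hpos : ∀ z, 0 ≤ᶠ[𝓝[>] 0] parabolicDensity f z := fun z =>
    eventually_mem_nhdsWithin.mono fun R hR => parabolicDensity_nonneg hf0 z (le_of_lt hR)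
  refine ⟨measure_mono_null (image_mono ?_) hnull, measure_mono_null (image_mono ?_) hnull⟩
  · exact fun z ⟨hzS, hz⟩ => ⟨hzS, exists_pos_frequently_le_of_pos_limsup (hpos z) hz⟩
  · exact fun z ⟨hzS, hz⟩ => ⟨hzS, exists_pos_frequently_le_of_not_tendsto_zero (hpos z) hz⟩

end
end
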